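/- arXiv:1203.5480 — 2 statements merged into one kernel-verified Lean document; each statement's English description precedes it below -/
import Mathlib

section
/- Let λ ≥ 0 and let f be a bi-univalent function of the class R_σ(λ, φ), i.e. f is bi-univalent with inverse extension F and both (1−λ)f(z)/z + λf'(z) ≺ φ(z) and (1−λ)F(w)/w + λF'(w) ≺ φ(w). Then the second Taylor coefficient of f satisfies |a₂| ≤ √((B₁ + |B₁ − B₂|)/(1 + 2λ)). -/
/-!
Let `u` and `v` be the Schwarz functions of the two subordinations. Since `f(0) = 0`, the first
one reads `z φ(u z) = (1 - λ) f(z) + λ z f'(z)` near `0`; comparing the coefficients of `z²` and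
`z³` gives `(1 + λ) a₂ = B₁ u₁` and `(1 + 2λ) a₃ = B₁ u₂ + B₂ u₁²`, where `u(z) = u₁ z + u₂ z² + ⋯`.
The same holds for `F` and `v`, with the coefficients `-a₂` and `2a₂² - a₃` of `F`. Hence
`v₁ = -u₁`, and adding the two relations of order three eliminates `a₃`:
`(1 + 2λ) a₂² = B₂ u₁² + B₁ (u₂ + v₂) / 2`.
The Schwarz–Pick lemma applied to `u(z) / z` gives `|u₂| ≤ 1 - |u₁|²`, and so
`(1 + 2λ) |a₂|² ≤ |B₂| t + B₁ (1 - t)` with `t = |u₁|² ∈ [0, 1]`, which is at most `B₁ + |B₁ - B₂|`.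
-/

open Metric Set Complex

noncomputable section

/-- `g` is subordinate to `h` on the unit disk: there is an analytic `ω : 𝔻 → 𝔻`
with `ω 0 = 0` such that `g = h ∘ ω` on `𝔻`. -/
def Subordinate (g h : ℂ → ℂ) : Prop :=
  ∃ ω : ℂ → ℂ, DifferentiableOn ℂ ω (ball 0 1) ∧ ω 0 = 0 ∧
    (∀ z ∈ ball (0 : ℂ) 1, ω z ∈ ball (0 : ℂ) 1) ∧
    ∀ z ∈ ball (0 : ℂ) 1, g z = h (ω z)

open Filter Topology ComplexConjugate

section IteratedDeriv

variable {𝕜 : Type*} [NontriviallyNormedField 𝕜]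

lemma iteratedDeriv_succ_id_mul_zero {p : 𝕜 → 𝕜} {n : ℕ} (hp : ContDiffAt 𝕜 (n + 1) p 0) :
    iteratedDeriv (n + 1) (fun z => z * p z) 0 = (n + 1) * iteratedDeriv n p 0 := by
  rw [iteratedDeriv_fun_mul contDiffAt_id (by exact_mod_cast hp), Finset.sum_eq_single 1]
  · simp [iteratedDeriv_fun_id_zero]
  · intro i _ hi
    simp [iteratedDeriv_fun_id_zero, hi]
  · simp

lemma iteratedDeriv_sub_mul_add_mul_id_mul_deriv_zero [CompleteSpace 𝕜] {f : 𝕜 → 𝕜} (lam : 𝕜)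
    (hf : AnalyticAt 𝕜 f 0) (n : ℕ) :
    iteratedDeriv (n + 1) (fun z => (1 - lam) * f z + lam * (z * deriv f z)) 0
      = (1 + n * lam) * iteratedDeriv (n + 1) f 0 := by
  rw [iteratedDeriv_fun_add (by fun_prop : AnalyticAt 𝕜 (fun z => (1 - lam) * f z) 0).contDiffAt
      (by fun_prop : AnalyticAt 𝕜 (fun z => lam * (z * deriv f z)) 0).contDiffAt,
    iteratedDeriv_const_mul_field, iteratedDeriv_const_mul_field,
    iteratedDeriv_succ_id_mul_zero hf.deriv.contDiffAt, ← iteratedDeriv_succ']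
  ring

lemma iteratedDeriv_of_comp_eventuallyEq_id {f F : 𝕜 → 𝕜}
    (hf : ContDiffAt 𝕜 3 f 0) (hF : ContDiffAt 𝕜 3 F 0) (hf0 : f 0 = 0) (hf1 : deriv f 0 = 1)
    (hFf : F ∘ f =ᶠ[𝓝 0] id) :
    iteratedDeriv 2 F 0 = -iteratedDeriv 2 f 0 ∧
      iteratedDeriv 3 F 0 = 3 * iteratedDeriv 2 f 0 ^ 2 - iteratedDeriv 3 f 0 := by
  rw [← hf0] at hF
  have h1 := hFf.deriv_eq
  have h2 := hFf.iteratedDeriv_eq 2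
  have h3 := hFf.iteratedDeriv_eq 3
  rw [deriv_comp 0 (hF.differentiableAt (by norm_num)) (hf.differentiableAt (by norm_num))] at h1
  rw [iteratedDeriv_scomp_two (hF.of_le (by norm_num)) (hf.of_le (by norm_num))] at h2
  rw [iteratedDeriv_scomp_three hF hf] at h3
  simp only [hf0, hf1, deriv_id, mul_one, iteratedDeriv_id, smul_eq_mul, one_pow, one_mul] at h1 h2 h3
  norm_num at h2 h3
  rw [h1] at h2 h3
  refine ⟨by linear_combination h2, ?_⟩
  linear_combination h3 - 3 * iteratedDeriv 2 f 0 * h2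

end IteratedDeriv

lemma norm_sq_one_sub_conj_mul_sub_norm_sq_sub (c w : ℂ) :
    ‖1 - conj c * w‖ ^ 2 - ‖w - c‖ ^ 2 = (1 - ‖c‖ ^ 2) * (1 - ‖w‖ ^ 2) := by
  simp only [← Complex.normSq_eq_norm_sq, Complex.normSq_apply, Complex.sub_re, Complex.sub_im,
    Complex.mul_re, Complex.mul_im, Complex.one_re, Complex.one_im, Complex.conj_re,
    Complex.conj_im]
  ring

lemma norm_sub_le_norm_one_sub_conj_mul {c w : ℂ} (hc : ‖c‖ ≤ 1) (hw : ‖w‖ ≤ 1) :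
    ‖w - c‖ ≤ ‖1 - conj c * w‖ := by
  have := norm_sq_one_sub_conj_mul_sub_norm_sq_sub c w
  have : 0 ≤ (1 - ‖c‖ ^ 2) * (1 - ‖w‖ ^ 2) :=
    mul_nonneg (by nlinarith [norm_nonneg c]) (by nlinarith [norm_nonneg w])
  exact (pow_le_pow_iff_left₀ (norm_nonneg _) (norm_nonneg _) two_ne_zero).mp (by linarith)

lemma norm_deriv_le_one_sub_sq_of_norm_lt_one {ψ : ℂ → ℂ}
    (hψ : DifferentiableOn ℂ ψ (ball 0 1)) (hmaps : MapsTo ψ (ball 0 1) (closedBall 0 1))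
    (hc : ‖ψ 0‖ < 1) :
    ‖deriv ψ 0‖ ≤ 1 - ‖ψ 0‖ ^ 2 := by
  have hball : ball (0 : ℂ) 1 ∈ 𝓝 0 := ball_mem_nhds 0 one_pos
  set c := ψ 0
  have hden : ∀ z ∈ ball (0 : ℂ) 1, 1 - conj c * ψ z ≠ 0 := by
    intro z hz
    have hlt : ‖conj c * ψ z‖ < 1 := by
      rw [norm_mul, Complex.norm_conj]
      exact lt_of_le_of_lt (mul_le_of_le_one_right (norm_nonneg c)
        (mem_closedBall_zero_iff.mp (hmaps hz))) hc
    exact sub_ne_zero.mpr fun h => by simp [← h] at hlt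
  set h : ℂ → ℂ := fun z => (ψ z - c) / (1 - conj c * ψ z)
  have hh : DifferentiableOn ℂ h (ball 0 1) :=
    (hψ.sub_const c).div ((differentiableOn_const 1).sub (hψ.const_mul _)) hden
  have hhmaps : MapsTo h (ball 0 1) (closedBall (h 0) 1) := by
    intro z hz
    have hz' := mem_closedBall_zero_iff.mp (hmaps hz)
    rw [mem_closedBall, dist_eq_norm]
    simp only [h, c, sub_self, zero_div, sub_zero, norm_div]
    exact div_le_one_of_le₀ (norm_sub_le_norm_one_sub_conj_mul hc.le hz') (norm_nonneg _)
  have hderiv : deriv h 0 = deriv ψ 0 / (1 - ‖c‖ ^ 2 : ℝ) := by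
    have hψd := (hψ.differentiableAt hball).hasDerivAt
    have := (hψd.sub_const c).fun_div ((hψd.const_mul (conj c)).const_sub 1)
      (hden 0 (mem_ball_self one_pos))
    rw [this.deriv, Complex.conj_mul']
    simp only [c, sub_self, zero_mul, sub_zero]
    push_cast
    field_simp
  have hpos : (0 : ℝ) < 1 - ‖c‖ ^ 2 := by nlinarith [norm_nonneg c]
  have := Complex.norm_deriv_le_div_of_mapsTo_ball hh hhmaps one_pos
  rwa [hderiv, norm_div, Complex.norm_real, Real.norm_of_nonneg hpos.le, div_one,
    div_le_one hpos] at this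

theorem norm_deriv_le_one_sub_sq_of_mapsTo_closedBall {ψ : ℂ → ℂ}
    (hψ : DifferentiableOn ℂ ψ (ball 0 1)) (hmaps : MapsTo ψ (ball 0 1) (closedBall 0 1)) :
    ‖deriv ψ 0‖ ≤ 1 - ‖ψ 0‖ ^ 2 := by
  have hball : ball (0 : ℂ) 1 ∈ 𝓝 0 := ball_mem_nhds 0 one_pos
  rcases (mem_closedBall_zero_iff.mp (hmaps (mem_ball_self one_pos))).eq_or_lt with hc | hc
  · have hmax : IsLocalMax (norm ∘ ψ) 0 := by
      filter_upwards [hball] with z hz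
      simpa [hc] using hmaps hz
    have hconst : ψ =ᶠ[𝓝 0] fun _ => ψ 0 := Complex.eventually_eq_of_isLocalMax_norm
      (hψ.eventually_differentiableAt hball) hmax
    rw [hconst.deriv_eq, deriv_const, hc]
    norm_num
  · exact norm_deriv_le_one_sub_sq_of_norm_lt_one hψ hmaps hc

def IsSchwarzFunction (ω : ℂ → ℂ) : Prop :=
  DifferentiableOn ℂ ω (ball 0 1) ∧ ω 0 = 0 ∧ MapsTo ω (ball 0 1) (ball 0 1)

lemma Subordinate.exists_isSchwarzFunction {g h : ℂ → ℂ} (hgh : Subordinate g h) :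
    ∃ ω, IsSchwarzFunction ω ∧ EqOn g (h ∘ ω) (ball 0 1) :=
  let ⟨ω, hd, h0, hmaps, heq⟩ := hgh
  ⟨ω, ⟨hd, h0, hmaps⟩, heq⟩

namespace IsSchwarzFunction

variable {ω : ℂ → ℂ} (hω : IsSchwarzFunction ω)
include hω

lemma analyticAt_zero : AnalyticAt ℂ ω 0 :=
  hω.1.analyticAt (ball_mem_nhds 0 one_pos)

theorem norm_iteratedDeriv_two_le : ‖iteratedDeriv 2 ω 0‖ ≤ 2 * (1 - ‖deriv ω 0‖ ^ 2) := by
  obtain ⟨hd, h0, hmaps⟩ := hω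
  have hball : ball (0 : ℂ) 1 ∈ 𝓝 0 := ball_mem_nhds 0 one_pos
  set ψ := dslope ω 0
  have hψ : DifferentiableOn ℂ ψ (ball 0 1) := (differentiableOn_dslope hball).mpr hd
  have hmaps' : MapsTo ω (ball 0 1) (closedBall (ω 0) 1) := by
    rw [h0]; exact hmaps.mono_right ball_subset_closedBall
  have hψmaps : MapsTo ψ (ball 0 1) (closedBall 0 1) := fun z hz => by
    simpa using Complex.norm_dslope_le_div_of_mapsTo_ball hd hmaps' hz
  have hωψ : ω = fun z => z * ψ z := funext fun z => by
    simpa [h0] using (sub_smul_dslope ω 0 z).symm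
  have h2 : iteratedDeriv 2 ω 0 = 2 * deriv ψ 0 := by
    rw [hωψ, iteratedDeriv_succ_id_mul_zero (hψ.analyticAt hball).contDiffAt, iteratedDeriv_one]
    norm_num
  rw [h2, norm_mul, Complex.norm_two, ← dslope_same ω 0]
  gcongr
  exact norm_deriv_le_one_sub_sq_of_mapsTo_closedBall hψ hψmaps

end IsSchwarzFunction

theorem Subordinate.exists_coeff_relations {lam : ℂ} {f g φ : ℂ → ℂ}
    (hf : DifferentiableOn ℂ f (ball 0 1)) (hf0 : f 0 = 0) (hφ : DifferentiableOn ℂ φ (ball 0 1))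
    (hgf : ∀ z ∈ ball (0 : ℂ) 1, z ≠ 0 → g z = (1 - lam) * (f z / z) + lam * deriv f z)
    (hgφ : Subordinate g φ) :
    ∃ ω, IsSchwarzFunction ω ∧
      2 * (deriv φ 0 * deriv ω 0) = (1 + lam) * iteratedDeriv 2 f 0 ∧
      3 * (deriv ω 0 ^ 2 * iteratedDeriv 2 φ 0 + iteratedDeriv 2 ω 0 * deriv φ 0)
        = (1 + 2 * lam) * iteratedDeriv 3 f 0 := by
  obtain ⟨ω, hω, hgω⟩ := hgφ.exists_isSchwarzFunction
  have hball : ball (0 : ℂ) 1 ∈ 𝓝 0 := ball_mem_nhds 0 one_pos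
  have hfA : AnalyticAt ℂ f 0 := hf.analyticAt hball
  have hωA : AnalyticAt ℂ ω 0 := hω.analyticAt_zero
  have hφA : AnalyticAt ℂ φ (ω 0) := by rw [hω.2.1]; exact hφ.analyticAt hball
  have hφωA : AnalyticAt ℂ (φ ∘ ω) 0 := hφA.comp hωA
  have hmul : (fun z => z * (φ ∘ ω) z) =ᶠ[𝓝 0]
      fun z => (1 - lam) * f z + lam * (z * deriv f z) := by
    filter_upwards [hball] with z hz
    rcases eq_or_ne z 0 with rfl | hz0
    · simp [hf0]
    · rw [← hgω hz, hgf z hz hz0]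
      field_simp
  have h2 := hmul.iteratedDeriv_eq 2
  have h3 := hmul.iteratedDeriv_eq 3
  rw [iteratedDeriv_succ_id_mul_zero hφωA.contDiffAt,
    iteratedDeriv_sub_mul_add_mul_id_mul_deriv_zero lam hfA] at h2 h3
  rw [iteratedDeriv_one, deriv_comp 0 hφA.differentiableAt hωA.differentiableAt] at h2
  rw [iteratedDeriv_scomp_two hφA.contDiffAt hωA.contDiffAt, hω.2.1] at h3
  rw [hω.2.1] at h2
  refine ⟨ω, hω, by linear_combination h2, by linear_combination h3⟩

lemma abs_mul_add_mul_one_sub_le {B₁ B₂ t : ℝ} (hB₁ : 0 ≤ B₁) (ht₀ : 0 ≤ t) (ht₁ : t ≤ 1) :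
    |B₂| * t + B₁ * (1 - t) ≤ B₁ + |B₁ - B₂| := by
  have : |B₂| ≤ B₁ + |B₁ - B₂| := by
    simpa [abs_of_nonneg hB₁] using abs_sub B₁ (B₁ - B₂)
  nlinarith [abs_nonneg (B₁ - B₂)]

theorem norm_sq_le_of_coeff_relations {lam B₁ B₂ : ℝ} {f₂ f₃ u₁ u₂ v₁ v₂ : ℂ}
    (hlam : 0 ≤ 1 + 2 * lam) (hB₁ : 0 < B₁)
    (hu : ‖u₂‖ ≤ 2 * (1 - ‖u₁‖ ^ 2)) (hv : ‖v₂‖ ≤ 2 * (1 - ‖v₁‖ ^ 2))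
    (hu₁ : 2 * (B₁ * u₁) = (1 + lam) * f₂) (hv₁ : 2 * (B₁ * v₁) = (1 + lam) * -f₂)
    (hu₂ : 3 * (u₁ ^ 2 * (2 * B₂) + u₂ * B₁) = (1 + 2 * lam) * f₃)
    (hv₂ : 3 * (v₁ ^ 2 * (2 * B₂) + v₂ * B₁) = (1 + 2 * lam) * (3 * f₂ ^ 2 - f₃)) :
    (1 + 2 * lam) * ‖f₂‖ ^ 2 ≤ 4 * (B₁ + |B₁ - B₂|) := by
  have hvu : v₁ = -u₁ := by
    have : (2 * B₁ : ℂ) ≠ 0 := by exact_mod_cast (by positivity : (2 * B₁ : ℝ) ≠ 0)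
    exact mul_left_cancel₀ this (by linear_combination hv₁ + hu₁)
  have hsum : ((1 + 2 * lam : ℝ) : ℂ) * f₂ ^ 2 = 4 * B₂ * u₁ ^ 2 + B₁ * (u₂ + v₂) := by
    subst hvu; push_cast; linear_combination -(hu₂ + hv₂) / 3
  rw [hvu, norm_neg] at hv
  have ht₁ : ‖u₁‖ ^ 2 ≤ 1 := by nlinarith [norm_nonneg u₂]
  calc (1 + 2 * lam) * ‖f₂‖ ^ 2 = ‖4 * B₂ * u₁ ^ 2 + B₁ * (u₂ + v₂)‖ := by
        rw [← hsum, norm_mul, norm_pow, Complex.norm_real, Real.norm_of_nonneg hlam]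
    _ ≤ 4 * |B₂| * ‖u₁‖ ^ 2 + B₁ * (‖u₂‖ + ‖v₂‖) := by
        refine (norm_add_le _ _).trans (add_le_add ?_ ?_)
        · simp [Complex.norm_real]
        · rw [norm_mul, Complex.norm_real, Real.norm_of_nonneg hB₁.le]
          exact mul_le_mul_of_nonneg_left (norm_add_le _ _) hB₁.le
    _ ≤ 4 * (|B₂| * ‖u₁‖ ^ 2 + B₁ * (1 - ‖u₁‖ ^ 2)) := by nlinarith
    _ ≤ 4 * (B₁ + |B₁ - B₂|) := by
        linarith [abs_mul_add_mul_one_sub_le (B₂ := B₂) hB₁.le (sq_nonneg ‖u₁‖) ht₁]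

theorem stmt0_general (lam : ℝ) (hlam : 0 ≤ lam)
    (f F : ℂ → ℂ)
    (hf : DifferentiableOn ℂ f (ball 0 1)) (hf0 : f 0 = 0) (hf1 : deriv f 0 = 1)
    (hF : DifferentiableOn ℂ F (ball 0 1)) (hF0 : F 0 = 0)
    (hFf : ∀ᶠ z in nhds (0 : ℂ), F (f z) = z)
    (φ : ℂ → ℂ) (B₁ B₂ : ℝ)
    (hφ : DifferentiableOn ℂ φ (ball 0 1))
    (hB₁ : 0 < B₁) (hφ1 : deriv φ 0 = (B₁ : ℂ)) (hφ2 : iteratedDeriv 2 φ 0 = 2 * (B₂ : ℂ))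
    (g : ℂ → ℂ)
    (hgf : ∀ z ∈ ball (0 : ℂ) 1, z ≠ 0 →
      g z = (1 - (lam : ℂ)) * (f z / z) + (lam : ℂ) * deriv f z)
    (hgsub : Subordinate g φ)
    (G : ℂ → ℂ)
    (hGF : ∀ w ∈ ball (0 : ℂ) 1, w ≠ 0 →
      G w = (1 - (lam : ℂ)) * (F w / w) + (lam : ℂ) * deriv F w)
    (hGsub : Subordinate G φ) :
    ‖iteratedDeriv 2 f 0 / 2‖ ≤ Real.sqrt ((B₁ + |B₁ - B₂|) / (1 + 2 * lam)) := by
  have hball : ball (0 : ℂ) 1 ∈ 𝓝 0 := ball_mem_nhds 0 one_pos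
  obtain ⟨u, hu, hu₁, hu₂⟩ := hgsub.exists_coeff_relations hf hf0 hφ hgf
  obtain ⟨v, hv, hv₁, hv₂⟩ := hGsub.exists_coeff_relations hF hF0 hφ hGF
  obtain ⟨hF₂, hF₃⟩ := iteratedDeriv_of_comp_eventuallyEq_id
    (hf.analyticAt hball).contDiffAt (hF.analyticAt hball).contDiffAt hf0 hf1 hFf
  rw [hφ1] at hu₁ hv₁ hu₂ hv₂
  rw [hφ2] at hu₂ hv₂
  rw [hF₂] at hv₁
  rw [hF₃] at hv₂
  have hbound := norm_sq_le_of_coeff_relations (by linarith) hB₁ hu.norm_iteratedDeriv_two_le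
    hv.norm_iteratedDeriv_two_le hu₁ hv₁ hu₂ hv₂
  have hpos : (0 : ℝ) < 1 + 2 * lam := by linarith
  rw [norm_div, Complex.norm_two]
  apply Real.le_sqrt_of_sq_le
  rw [div_pow, le_div_iff₀ hpos]
  nlinarith

theorem stmt0 (lam : ℝ) (hlam : 0 ≤ lam)
    (f F : ℂ → ℂ)
    (hf : DifferentiableOn ℂ f (ball 0 1)) (hf0 : f 0 = 0) (hf1 : deriv f 0 = 1)
    (hfi : InjOn f (ball 0 1))
    (hF : DifferentiableOn ℂ F (ball 0 1)) (hF0 : F 0 = 0) (hFi : InjOn F (ball 0 1))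
    (hFf : ∀ᶠ z in nhds (0 : ℂ), F (f z) = z)
    (φ : ℂ → ℂ) (B₁ B₂ : ℝ)
    (hφ : DifferentiableOn ℂ φ (ball 0 1)) (hφ0 : φ 0 = 1)
    (hB₁ : 0 < B₁) (hφ1 : deriv φ 0 = (B₁ : ℂ)) (hφ2 : iteratedDeriv 2 φ 0 = 2 * (B₂ : ℂ))
    (g : ℂ → ℂ) (hg0 : g 0 = 1)
    (hgf : ∀ z ∈ ball (0 : ℂ) 1, z ≠ 0 →
      g z = (1 - (lam : ℂ)) * (f z / z) + (lam : ℂ) * deriv f z)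
    (hgsub : Subordinate g φ)
    (G : ℂ → ℂ) (hG0 : G 0 = 1)
    (hGF : ∀ w ∈ ball (0 : ℂ) 1, w ≠ 0 →
      G w = (1 - (lam : ℂ)) * (F w / w) + (lam : ℂ) * deriv F w)
    (hGsub : Subordinate G φ) :
    ‖iteratedDeriv 2 f 0 / 2‖ ≤ Real.sqrt ((B₁ + |B₁ - B₂|) / (1 + 2 * lam)) :=
  stmt0_general lam hlam f F hf hf0 hf1 hF hF0 hFf φ B₁ B₂ hφ hB₁ hφ1 hφ2 g hgf hgsub G hGF hGsub
end
end

section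
/- Let 0 ≤ β < 1 and let f be bi-univalent with inverse extension F, such that f'(z) ≺ (1+(1−2β)z)/(1−z) and F'(w) ≺ (1+(1−2β)w)/(1−w) (equivalently, Re f'(z) > β and Re F'(w) > β on 𝔻). Then the second Taylor coefficient of f satisfies |a₂| ≤ √(2(1−β)/3). -/
open Metric Set Complex

noncomputable section

/-!
Differentiating `F (f z) = z` three times at `0` gives `F'''(0) + f'''(0) = 3 f''(0)²`. Both `f'`
and `F'` take the value `1` at `0` and have real part `> β` on the disc, so by Carathéodory's
inequality their second derivatives at `0` have modulus at most `4(1 - β)`. Hence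
`3 |f''(0)|² ≤ 8(1 - β)`, which is `|a₂|² ≤ 2(1 - β)/3`.

Carathéodory's inequality reduces to the Schwarz lemma: passing to the even part of `g` kills
`g'(0)` without changing `g''(0)`, and then `ω = (g - 1)/(g - (2β - 1))` maps the disc into itself
with a double zero at `0`, so that `|ω''(0)| ≤ 2`.
-/

open Filter Topology

section LeftInverse

variable {𝕜 : Type*} [NontriviallyNormedField 𝕜] {f F : 𝕜 → 𝕜} {x : 𝕜}

theorem HasDerivAt.eq_zero_of_eventually_eq_const {h : 𝕜 → 𝕜} {c d : 𝕜} (hd : HasDerivAt h d x)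
    (hc : ∀ᶠ z in 𝓝 x, h z = c) : d = 0 :=
  hd.unique ((hasDerivAt_const x c).congr_of_eventuallyEq hc)

theorem hasDerivAt_comp_mul {u v : 𝕜 → 𝕜} {v' : 𝕜} (hu : DifferentiableAt 𝕜 u (f x))
    (hf : DifferentiableAt 𝕜 f x) (hv : HasDerivAt v v' x) :
    HasDerivAt (fun z ↦ u (f z) * v z) (deriv u (f x) * deriv f x * v x + u (f x) * v') x :=
  (hu.hasDerivAt.comp x hf.hasDerivAt).mul hv

variable [CompleteSpace 𝕜]

theorem AnalyticAt.eventually_analyticAt_comp (hf : AnalyticAt 𝕜 f x)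
    (hF : AnalyticAt 𝕜 F (f x)) : ∀ᶠ z in 𝓝 x, AnalyticAt 𝕜 f z ∧ AnalyticAt 𝕜 F (f z) :=
  hf.eventually_analyticAt.and (hf.continuousAt.tendsto.eventually hF.eventually_analyticAt)

variable (hf : AnalyticAt 𝕜 f x) (hF : AnalyticAt 𝕜 F (f x)) (hFf : ∀ᶠ z in 𝓝 x, F (f z) = z)
include hf hF hFf

theorem eventually_deriv_comp_mul_deriv_eq_one :
    ∀ᶠ z in 𝓝 x, deriv F (f z) * deriv f z = 1 := by
  filter_upwards [hf.eventually_analyticAt_comp hF, hFf.eventually_nhds] with z ⟨hfz, hFz⟩ hFfz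
  exact (hFz.differentiableAt.hasDerivAt.comp z hfz.differentiableAt.hasDerivAt).unique
    ((hasDerivAt_id z).congr_of_eventuallyEq hFfz)

theorem eventually_deriv_deriv_comp_mul_sq_add_eq_zero :
    ∀ᶠ z in 𝓝 x, deriv (deriv F) (f z) * deriv f z ^ 2 + deriv F (f z) * deriv (deriv f) z = 0 := by
  filter_upwards [hf.eventually_analyticAt_comp hF,
    (eventually_deriv_comp_mul_deriv_eq_one hf hF hFf).eventually_nhds] with z ⟨hfz, hFz⟩ h1
  linear_combination (hasDerivAt_comp_mul hFz.deriv.differentiableAt hfz.differentiableAt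
    hfz.deriv.differentiableAt.hasDerivAt).eq_zero_of_eventually_eq_const h1

theorem iteratedDeriv_three_add_of_comp_eq_id (hf1 : deriv f x = 1) :
    iteratedDeriv 3 F (f x) + iteratedDeriv 3 f x = 3 * iteratedDeriv 2 f x ^ 2 := by
  have hF1 : deriv F (f x) = 1 := by
    simpa [hf1] using (eventually_deriv_comp_mul_deriv_eq_one hf hF hFf).self_of_nhds
  have hF2 : deriv (deriv F) (f x) = -deriv (deriv f) x := by
    have h2 := (eventually_deriv_deriv_comp_mul_sq_add_eq_zero hf hF hFf).self_of_nhds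
    rw [hf1, hF1] at h2
    linear_combination h2
  have h3 := ((hasDerivAt_comp_mul hF.deriv.deriv.differentiableAt hf.differentiableAt
    (hf.deriv.differentiableAt.hasDerivAt.pow 2)).add
    (hasDerivAt_comp_mul hF.deriv.differentiableAt hf.differentiableAt
      hf.deriv.deriv.differentiableAt.hasDerivAt)).eq_zero_of_eventually_eq_const
    (eventually_deriv_deriv_comp_mul_sq_add_eq_zero hf hF hFf)
  simp only [iteratedDeriv_succ, iteratedDeriv_zero]
  rw [Pi.pow_apply, hf1, hF1, hF2] at h3
  linear_combination h3

end LeftInverse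

theorem iteratedDeriv_sub_const {𝕜 : Type*} [NontriviallyNormedField 𝕜] {f : 𝕜 → 𝕜} {n : ℕ}
    (hn : 0 < n) (c x : 𝕜) : iteratedDeriv n (fun z ↦ f z - c) x = iteratedDeriv n f x := by
  simpa [sub_eq_neg_add] using iteratedDeriv_const_add hn (-c) (f := f) (x := x)

theorem DifferentiableOn.contDiffAt_of_mem_ball {f : ℂ → ℂ} {c z : ℂ} {r : ℝ} {n : WithTop ℕ∞}
    (hf : DifferentiableOn ℂ f (ball c r)) (hz : z ∈ ball c r) : ContDiffAt ℂ n f z :=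
  (hf.contDiffOn isOpen_ball).contDiffAt (isOpen_ball.mem_nhds hz)

theorem iteratedDeriv_two_eq_two_mul_deriv_dslope {ω : ℂ → ℂ}
    (hω : DifferentiableOn ℂ ω (ball 0 1)) :
    iteratedDeriv 2 ω 0 = 2 * deriv (dslope ω 0) 0 := by
  have hψ : DifferentiableOn ℂ (dslope ω 0) (ball 0 1) :=
    (differentiableOn_dslope (isOpen_ball.mem_nhds (mem_ball_self one_pos))).mpr hω
  have hω_eq : (fun z ↦ ω z - ω 0) = fun z ↦ z * dslope ω 0 z := by
    funext z; simpa using (sub_smul_dslope ω 0 z).symm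
  have := congrArg (iteratedDeriv 2 · 0) hω_eq
  rw [iteratedDeriv_sub_const two_pos, iteratedDeriv_fun_mul (f := fun z ↦ z) contDiffAt_id
    (hψ.contDiffAt_of_mem_ball (mem_ball_self one_pos))] at this
  simpa [Finset.sum_range_succ, iteratedDeriv_fun_id_zero] using this

theorem norm_iteratedDeriv_two_le_of_mapsTo_ball {ω : ℂ → ℂ}
    (hω : DifferentiableOn ℂ ω (ball 0 1)) (hmaps : MapsTo ω (ball 0 1) (closedBall 0 1))
    (h0 : ω 0 = 0) (h1 : deriv ω 0 = 0) :
    ‖iteratedDeriv 2 ω 0‖ ≤ 2 := by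
  have hψ : DifferentiableOn ℂ (dslope ω 0) (ball 0 1) :=
    (differentiableOn_dslope (isOpen_ball.mem_nhds (mem_ball_self one_pos))).mpr hω
  have hψmaps : MapsTo (dslope ω 0) (ball 0 1) (closedBall (dslope ω 0 0) 1) := by
    intro z hz
    rw [dslope_same, h1, mem_closedBall_zero_iff]
    simpa using norm_dslope_le_div_of_mapsTo_ball hω
      (show MapsTo ω (ball 0 1) (closedBall (ω 0) 1) by rwa [h0]) hz
  rw [iteratedDeriv_two_eq_two_mul_deriv_dslope hω, norm_mul, Complex.norm_two]
  linarith [norm_deriv_le_one_of_mapsTo_ball hψ hψmaps one_pos]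

/-- `2β - 1` is the reflection of `1` in the line `Re w = β`. -/
theorem norm_sub_one_lt_norm_sub_of_lt_re {β : ℝ} {w : ℂ} (hβ : β < 1) (hw : β < w.re) :
    ‖w - 1‖ < ‖w - (2 * β - 1 : ℝ)‖ := by
  rw [← sq_lt_sq₀ (norm_nonneg _) (norm_nonneg _), Complex.sq_norm, Complex.sq_norm]
  simp only [normSq_apply, sub_re, sub_im, one_re, one_im, ofReal_re, ofReal_im]
  nlinarith

theorem norm_iteratedDeriv_two_le_of_deriv_eq_zero {β : ℝ} {q : ℂ → ℂ}
    (hq : DifferentiableOn ℂ q (ball 0 1)) (hq0 : q 0 = 1) (hq1 : deriv q 0 = 0)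
    (hre : ∀ z ∈ ball (0 : ℂ) 1, β < (q z).re) :
    ‖iteratedDeriv 2 q 0‖ ≤ 4 * (1 - β) := by
  have h0 : (0 : ℂ) ∈ ball 0 1 := mem_ball_self one_pos
  have hβ : β < 1 := by simpa [hq0] using hre 0 h0
  set c : ℂ := ((2 * β - 1 : ℝ) : ℂ)
  have hlt : ∀ z ∈ ball (0 : ℂ) 1, ‖q z - 1‖ < ‖q z - c‖ := fun z hz ↦
    norm_sub_one_lt_norm_sub_of_lt_re hβ (hre z hz)
  have hne : ∀ z ∈ ball (0 : ℂ) 1, q z - c ≠ 0 := fun z hz ↦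
    norm_pos_iff.mp ((norm_nonneg _).trans_lt (hlt z hz))
  set ω : ℂ → ℂ := fun z ↦ (q z - 1) / (q z - c)
  have hω : DifferentiableOn ℂ ω (ball 0 1) :=
    (hq.sub_const 1).div (hq.sub_const c) hne
  have hωmaps : MapsTo ω (ball 0 1) (closedBall 0 1) := fun z hz ↦ by
    rw [mem_closedBall_zero_iff, norm_div]
    exact div_le_one_of_le₀ (hlt z hz).le (norm_nonneg _)
  have hω0 : ω 0 = 0 := by simp [ω, hq0]
  have hc : (1 : ℂ) - c = (2 * (1 - β) : ℝ) := by push_cast [c]; ring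
  have hc0 : (1 : ℂ) - c ≠ 0 := by rw [hc]; exact_mod_cast (by linarith : 2 * (1 - β) ≠ 0)
  have hleibniz : ∀ n, 0 < n → iteratedDeriv n q 0 = ∑ i ∈ Finset.range (n + 1),
      n.choose i * iteratedDeriv i ω 0 * iteratedDeriv (n - i) (fun z ↦ q z - c) 0 := by
    intro n hn
    have heq : (fun z ↦ q z - 1) =ᶠ[𝓝 0] fun z ↦ ω z * (q z - c) :=
      eventually_of_mem (isOpen_ball.mem_nhds h0) fun z hz ↦ (div_mul_cancel₀ _ (hne z hz)).symm
    rw [← iteratedDeriv_sub_const hn 1, (heq.iteratedDeriv n).self_of_nhds,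
      iteratedDeriv_fun_mul (hω.contDiffAt_of_mem_ball h0)
        ((hq.sub_const c).contDiffAt_of_mem_ball h0)]
  have hω1 : deriv ω 0 = 0 := by
    have h1 : deriv ω 0 * (1 - c) = 0 := by
      simpa [Finset.sum_range_succ, hq1, hω0, hq0] using (hleibniz 1 one_pos).symm
    exact (mul_eq_zero.mp h1).resolve_right hc0
  have hω2 : iteratedDeriv 2 q 0 = iteratedDeriv 2 ω 0 * (1 - c) := by
    simpa [Finset.sum_range_succ, hq1, hω0, hq0, hω1, iteratedDeriv_sub_const] using
      hleibniz 2 two_pos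
  rw [hω2, norm_mul, hc, norm_real, Real.norm_of_nonneg (by linarith)]
  nlinarith [norm_iteratedDeriv_two_le_of_mapsTo_ball hω hωmaps hω0 hω1]

theorem norm_iteratedDeriv_two_le_of_lt_re {β : ℝ} {g : ℂ → ℂ}
    (hg : DifferentiableOn ℂ g (ball 0 1)) (hg0 : g 0 = 1)
    (hre : ∀ z ∈ ball (0 : ℂ) 1, β < (g z).re) :
    ‖iteratedDeriv 2 g 0‖ ≤ 4 * (1 - β) := by
  have h0 : (0 : ℂ) ∈ ball 0 1 := mem_ball_self one_pos
  have hneg : MapsTo (fun z : ℂ ↦ -z) (ball 0 1) (ball 0 1) := fun z hz ↦ by simpa using hz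
  have hg' : DifferentiableOn ℂ (fun z ↦ g (-z)) (ball 0 1) :=
    hg.comp (differentiableOn_neg _) hneg
  have heven : ∀ n, iteratedDeriv n (fun z ↦ (g z + g (-z)) / 2) 0
      = (1 + (-1) ^ n) / 2 * iteratedDeriv n g 0 := by
    intro n
    rw [iteratedDeriv_div_const, iteratedDeriv_fun_add (hg.contDiffAt_of_mem_ball h0)
      (hg'.contDiffAt_of_mem_ball h0), iteratedDeriv_comp_neg, neg_zero, smul_eq_mul]
    ring
  have hbound := norm_iteratedDeriv_two_le_of_deriv_eq_zero (β := β)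
    (q := fun z ↦ (g z + g (-z)) / 2) ((hg.add hg').div_const 2) (by simp [hg0])
    (by simpa using heven 1) fun z hz ↦ by
      simp only [div_ofNat_re, add_re]
      linarith [hre z hz, hre (-z) (hneg hz)]
  simpa [heven 2] using hbound

theorem stmt1_general (β : ℝ)
    (f F : ℂ → ℂ)
    (hf : DifferentiableOn ℂ f (ball 0 1)) (hf0 : f 0 = 0) (hf1 : deriv f 0 = 1)
    (hF : DifferentiableOn ℂ F (ball 0 1))
    (hFf : ∀ᶠ z in nhds (0 : ℂ), F (f z) = z)
    (hfre : ∀ z ∈ ball (0 : ℂ) 1, β < (deriv f z).re)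
    (hFre : ∀ w ∈ ball (0 : ℂ) 1, β < (deriv F w).re) :
    ‖iteratedDeriv 2 f 0 / 2‖ ≤ Real.sqrt (2 * (1 - β) / 3) := by
  have h0 : ball (0 : ℂ) 1 ∈ 𝓝 0 := isOpen_ball.mem_nhds (mem_ball_self one_pos)
  have hfa : AnalyticAt ℂ f 0 := hf.analyticAt h0
  have hFa : AnalyticAt ℂ F (f 0) := by rw [hf0]; exact hF.analyticAt h0
  have hF1 : deriv F 0 = 1 := by
    simpa [hf0, hf1] using (eventually_deriv_comp_mul_deriv_eq_one hfa hFa hFf).self_of_nhds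
  have hsum := iteratedDeriv_three_add_of_comp_eq_id hfa hFa hFf hf1
  have hbf := norm_iteratedDeriv_two_le_of_lt_re (hf.deriv isOpen_ball) hf1 hfre
  have hbF := norm_iteratedDeriv_two_le_of_lt_re (hF.deriv isOpen_ball) hF1 hFre
  rw [← iteratedDeriv_succ'] at hbf hbF
  rw [hf0] at hsum
  have hsq : 3 * ‖iteratedDeriv 2 f 0‖ ^ 2 ≤ 8 * (1 - β) :=
    calc 3 * ‖iteratedDeriv 2 f 0‖ ^ 2 = ‖iteratedDeriv 3 F 0 + iteratedDeriv 3 f 0‖ := by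
          simp [hsum]
      _ ≤ 8 * (1 - β) := (norm_add_le _ _).trans (by linarith)
  apply Real.le_sqrt_of_sq_le
  rw [norm_div, Complex.norm_two, div_pow]
  linarith

theorem stmt1 (β : ℝ) (hβ0 : 0 ≤ β) (hβ1 : β < 1)
    (f F : ℂ → ℂ)
    (hf : DifferentiableOn ℂ f (ball 0 1)) (hf0 : f 0 = 0) (hf1 : deriv f 0 = 1)
    (hfi : InjOn f (ball 0 1))
    (hF : DifferentiableOn ℂ F (ball 0 1)) (hF0 : F 0 = 0) (hFi : InjOn F (ball 0 1))
    (hFf : ∀ᶠ z in nhds (0 : ℂ), F (f z) = z)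
    (hfre : ∀ z ∈ ball (0 : ℂ) 1, β < (deriv f z).re)
    (hFre : ∀ w ∈ ball (0 : ℂ) 1, β < (deriv F w).re) :
    ‖iteratedDeriv 2 f 0 / 2‖ ≤ Real.sqrt (2 * (1 - β) / 3) :=
  stmt1_general β f F hf hf0 hf1 hF hFf hfre hFre
end
end
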